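/- Let μ be a probability measure on a measurable space Y, let g : Y → ℝ be measurable, and suppose Z = ∫ exp(g) dμ satisfies 0 < Z < ∞. Let π* be the probability measure with density exp(g)/Z with respect to μ. Then for every probability measure π ≪ μ with g π-integrable and D_KL(π‖μ) < ∞, E_{y∼π}[g(y)] − D_KL(π‖μ) ≤ log Z, with equality if and only if π = π*. In particular π* is the unique maximizer of the KL-regularized objective π ↦ E_{y∼π}[g(y)] − D_KL(π‖μ). -/

import Mathlib

open MeasureTheory Real
open scoped ENNReal

/-- Kullback–Leibler divergence `D_KL(p‖q) = ∫ log(dp/dq) dp` (as a real number). -/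
noncomputable def klDiv {Y : Type*} [MeasurableSpace Y] (p q : Measure Y) : ℝ :=
  ∫ y, Real.log ((p.rnDeriv q) y).toReal ∂p

/-- Gibbs' inequality: the integral of the log-likelihood ratio of two probability
measures is nonnegative, and vanishes iff the measures coincide. -/
lemma gibbs_llr_nonneg {Y : Type*} [MeasurableSpace Y] (p ν : Measure Y)
    [IsProbabilityMeasure p] [IsProbabilityMeasure ν] (hac : p ≪ ν)
    (hint : Integrable (llr p ν) p) :
    0 ≤ ∫ y, llr p ν y ∂p ∧ ((∫ y, llr p ν y ∂p) = 0 ↔ p = ν) := by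
  set f := p.rnDeriv ν with hf
  have hfm : Measurable f := Measure.measurable_rnDeriv p ν
  have hpos : ∀ᵐ y ∂p, 0 < f y := Measure.rnDeriv_pos hac
  have hlt : ∀ᵐ y ∂p, f y < ∞ := hac.ae_le (Measure.rnDeriv_lt_top p ν)
  have hwd : ν.withDensity f = p := Measure.withDensity_rnDeriv_eq p ν hac
  have hlint : ∫⁻ y, (f y)⁻¹ ∂p ≤ 1 := by
    conv_lhs => rw [← hwd]
    rw [lintegral_withDensity_eq_lintegral_mul ν hfm (by fun_prop)]
    calc ∫⁻ y, (f * fun y => (f y)⁻¹) y ∂ν ≤ ∫⁻ _, 1 ∂ν :=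
          lintegral_mono fun y => ENNReal.mul_inv_le_one _
      _ = 1 := by simp
  have hinv_int : Integrable (fun y => ((f y)⁻¹).toReal) p :=
    integrable_toReal_of_lintegral_ne_top (by fun_prop)
      (lt_of_le_of_lt hlint ENNReal.one_lt_top).ne
  have hinv_lt : ∀ᵐ y ∂p, (f y)⁻¹ < ∞ := by
    filter_upwards [hpos] with y hy
    exact ENNReal.inv_lt_top.mpr hy
  have hinv_integral_eq : ∫ y, ((f y)⁻¹).toReal ∂p = (∫⁻ y, (f y)⁻¹ ∂p).toReal :=
    integral_toReal (by fun_prop) hinv_lt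
  have hinv_integral : ∫ y, ((f y)⁻¹).toReal ∂p ≤ 1 := by
    rw [hinv_integral_eq]
    simpa using ENNReal.toReal_mono ENNReal.one_ne_top hlint
  have hptwise : ∀ᵐ y ∂p, 1 - ((f y)⁻¹).toReal ≤ llr p ν y := by
    filter_upwards [hpos, hlt] with y hy hy'
    have h0 : 0 < (f y).toReal := ENNReal.toReal_pos hy.ne' hy'.ne
    have h1 := Real.log_le_sub_one_of_pos (inv_pos.mpr h0)
    rw [Real.log_inv] at h1
    rw [llr, ENNReal.toReal_inv]
    linarith
  have hsub_int : Integrable (fun y => 1 - ((f y)⁻¹).toReal) p :=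
    (integrable_const (1 : ℝ)).sub hinv_int
  have hsub_integral : ∫ y, (1 - ((f y)⁻¹).toReal) ∂p = 1 - ∫ y, ((f y)⁻¹).toReal ∂p := by
    rw [integral_sub (integrable_const (1 : ℝ)) hinv_int]
    simp
  have key : 1 - ∫ y, ((f y)⁻¹).toReal ∂p ≤ ∫ y, llr p ν y ∂p := by
    rw [← hsub_integral]
    exact integral_mono_ae hsub_int hint hptwise
  have h_nonneg : 0 ≤ ∫ y, llr p ν y ∂p := by linarith
  refine ⟨h_nonneg, ?_, ?_⟩
  · -- equality implies p = ν
    intro h0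
    -- the nonnegative integrand `llr - (1 - inv)` has zero integral
    have hdiff_int : Integrable (fun y => llr p ν y - (1 - ((f y)⁻¹).toReal)) p :=
      hint.sub hsub_int
    have hdiff_nonneg : 0 ≤ᵐ[p] fun y => llr p ν y - (1 - ((f y)⁻¹).toReal) := by
      filter_upwards [hptwise] with y hy
      simpa using hy
    have hdiff_integral : ∫ y, (llr p ν y - (1 - ((f y)⁻¹).toReal)) ∂p
        = (∫ y, ((f y)⁻¹).toReal ∂p) - 1 := by
      rw [integral_sub hint hsub_int, h0, hsub_integral]; ring
    have hinv_ge : (1 : ℝ) ≤ ∫ y, ((f y)⁻¹).toReal ∂p := by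
      have := integral_nonneg_of_ae hdiff_nonneg
      rw [hdiff_integral] at this
      linarith
    have hdiff_zero : ∫ y, (llr p ν y - (1 - ((f y)⁻¹).toReal)) ∂p = 0 := by
      rw [hdiff_integral]; linarith
    have hae : (fun y => llr p ν y - (1 - ((f y)⁻¹).toReal)) =ᵐ[p] 0 :=
      (integral_eq_zero_iff_of_nonneg_ae hdiff_nonneg hdiff_int).mp hdiff_zero
    -- deduce f = 1 a.e. [p]
    have hone : ∀ᵐ y ∂p, f y = 1 := by
      filter_upwards [hae, hpos, hlt] with y hy hy0 hy'
      have h0 : 0 < (f y).toReal := ENNReal.toReal_pos hy0.ne' hy'.ne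
      have heq1 : Real.log (f y).toReal = 1 - ((f y).toReal)⁻¹ := by
        have : llr p ν y - (1 - ((f y)⁻¹).toReal) = 0 := hy
        rw [llr, ENNReal.toReal_inv] at this
        linarith
      by_contra hne
      have htne : (f y).toReal ≠ 1 := by
        intro h; exact hne (by rwa [ENNReal.toReal_eq_one_iff] at h)
      have hinvne : ((f y).toReal)⁻¹ ≠ 1 := fun h => htne (by
        have := congrArg (·⁻¹) h; simpa using this)
      have := Real.log_lt_sub_one_of_pos (inv_pos.mpr h0) hinvne
      rw [Real.log_inv] at this
      linarith
    -- transfer to ν and conclude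
    set s : Set Y := {y | f y ≠ 1} with hs_def
    have hs : MeasurableSet s := (hfm (measurableSet_singleton 1)).compl
    have hps : p s = 0 := by
      have h := hone
      rw [ae_iff] at h
      simpa [hs_def] using h
    have hνsc : ∫⁻ y in sᶜ, f y ∂ν = ν sᶜ := by
      have hcong : ∫⁻ y in sᶜ, f y ∂ν = ∫⁻ _ in sᶜ, 1 ∂ν :=
        setLIntegral_congr_fun hs.compl (fun y hy => by
          simp only [hs_def, Set.mem_compl_iff, Set.mem_setOf_eq, not_not] at hy
          simp [hy])
      rw [hcong, setLIntegral_one]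
    have hνs : ∫⁻ y in s, f y ∂ν = 0 := by
      have := hwd ▸ (withDensity_apply f hs)
      rw [← this]
      exact hps
    have htot : (1 : ℝ≥0∞) = ν sᶜ := by
      have h1 : ∫⁻ y, f y ∂ν = 1 := by
        have := hwd ▸ (withDensity_apply f MeasurableSet.univ)
        simpa [Measure.restrict_univ] using this.symm
      calc (1 : ℝ≥0∞) = ∫⁻ y, f y ∂ν := h1.symm
        _ = ∫⁻ y in s, f y ∂ν + ∫⁻ y in sᶜ, f y ∂ν := (lintegral_add_compl _ hs).symm
        _ = ν sᶜ := by rw [hνs, hνsc, zero_add]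
    have hνs0 : ν s = 0 := by
      have hsum : ν s + ν sᶜ = 1 := by rw [measure_add_measure_compl hs, measure_univ]
      rw [← htot] at hsum
      have h01 : ν s + 1 = 0 + 1 := by rw [hsum, zero_add]
      exact (ENNReal.add_left_inj ENNReal.one_ne_top).mp h01
    have hνone : f =ᵐ[ν] 1 := by
      rw [Filter.EventuallyEq, ae_iff]
      simpa [hs_def] using hνs0
    calc p = ν.withDensity f := hwd.symm
      _ = ν.withDensity 1 := withDensity_congr_ae hνone
      _ = ν := withDensity_one
  · -- p = ν implies equality
    rintro rfl
    have : llr p p =ᵐ[p] 0 := by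
      filter_upwards [Measure.rnDeriv_self p] with y hy
      simp [llr, hy]
    rw [integral_congr_ae this]
    simp

/-- For a probability measure `μ`, a measurable `g` with
`Z = ∫ exp g dμ ∈ (0, ∞)`, and the tilted measure `pistar` with density `exp g / Z`
w.r.t. `μ`, every probability measure `p ≪ μ` with `g` `p`-integrable and finite
`D_KL(p‖μ)` satisfies `E_p[g] − D_KL(p‖μ) ≤ log Z`, with equality iff `p = pistar`;
i.e. `pistar` is the unique maximizer of the KL-regularized objective. -/
theorem gibbs_variational_inequality {Y : Type*} [MeasurableSpace Y]
    (μ : Measure Y) [IsProbabilityMeasure μ]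
    (g : Y → ℝ) (hg : Measurable g)
    (hZfin : Integrable (fun y => Real.exp (g y)) μ)
    (hZpos : 0 < ∫ y, Real.exp (g y) ∂μ)
    (pistar : Measure Y)
    (hpistar : pistar = μ.withDensity
      (fun y => ENNReal.ofReal (Real.exp (g y) / ∫ y', Real.exp (g y') ∂μ)))
    (p : Measure Y) [IsProbabilityMeasure p] (hac : p ≪ μ)
    (hgint : Integrable g p)
    (hKLfin : Integrable (fun y => Real.log ((p.rnDeriv μ) y).toReal) p) :
    (∫ y, g y ∂p) - klDiv p μ ≤ Real.log (∫ y, Real.exp (g y) ∂μ) ∧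
      ((∫ y, g y ∂p) - klDiv p μ = Real.log (∫ y, Real.exp (g y) ∂μ) ↔ p = pistar) := by
  have hpi : pistar = μ.tilted g := hpistar
  have hprob : IsProbabilityMeasure (μ.tilted g) := isProbabilityMeasure_tilted hZfin
  have hac2 : p ≪ μ.tilted g := hac.trans (absolutelyContinuous_tilted hZfin)
  have hKL : Integrable (llr p μ) p := hKLfin
  have hint2 : Integrable (llr p (μ.tilted g)) p :=
    integrable_llr_tilted_right hac hgint hKL hZfin
  have heq : ∫ y, llr p (μ.tilted g) y ∂p
      = ∫ y, llr p μ y ∂p - ∫ y, g y ∂p + Real.log (∫ y, Real.exp (g y) ∂μ) :=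
    integral_llr_tilted_right hac hgint hZfin hKL
  obtain ⟨h1, h2⟩ := gibbs_llr_nonneg p (μ.tilted g) hac2 hint2
  have hkl : klDiv p μ = ∫ y, llr p μ y ∂p := rfl
  rw [heq] at h1 h2
  constructor
  · rw [hkl]; linarith
  · rw [hpi, ← h2, hkl]
    constructor <;> intro h <;> linarith
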